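/- arXiv:math/0608519 — 3 statements merged into one kernel-verified Lean document; each statement's English description precedes it below -/
import Mathlib

section
/- A monoidal functor f : A → A' between categorical groups is an equivalence of categories if and only if it induces an isomorphism on π₀ (isomorphism classes of objects) and on π₁ (the automorphism group of the neutral object). -/
open CategoryTheory MonoidalCategory CategoryTheory.Functor

universe v u

/-- A categorical group: a monoidal groupoid in which every object has a weak inverse. -/
class CategoricalGroup (A : Type u) [Groupoid.{v} A] [MonoidalCategory A] where
  neg : A → A
  iota : ∀ a : A, neg a ⊗ a ≅ 𝟙_ A

/-- The setoid of objects of a category under isomorphism. -/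
def isoSetoid (A : Type u) [Category.{v} A] : Setoid A :=
  ⟨fun x y => Nonempty (x ≅ y),
    ⟨fun x => ⟨Iso.refl x⟩, fun ⟨e⟩ => ⟨e.symm⟩, fun ⟨e⟩ ⟨f⟩ => ⟨e.trans f⟩⟩⟩

/-- `π₀` of a category: isomorphism classes of objects. -/
def Pi0 (A : Type u) [Category.{v} A] : Type u := Quotient (isoSetoid A)

/-- `π₁` of a monoidal category: the endomorphisms (in a groupoid, automorphisms)
of the neutral object. -/
abbrev Pi1 (A : Type u) [Category.{v} A] [MonoidalCategory A] := 𝟙_ A ⟶ 𝟙_ A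

/-- The map induced on isomorphism classes of objects by a functor. -/
def piZeroMap {A A' : Type u} [Category.{v} A] [Category.{v} A']
    (F : A ⥤ A') : Pi0 A → Pi0 A' :=
  Quotient.map F.obj (fun _ _ ⟨e⟩ => ⟨F.mapIso e⟩)

/-- The map `f_#` induced on `π₁` by a monoidal functor, sending `β : 0 → 0` to
`f₀⁻¹ ∘ f(β) ∘ f₀` (written in diagrammatic order). -/
def piOneMap {A A' : Type u} [Category.{v} A] [MonoidalCategory A]
    [Category.{v} A'] [MonoidalCategory A']
    (F : A ⥤ A') [F.Monoidal] : Pi1 A → Pi1 A' :=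
  fun β => LaxMonoidal.ε F ≫ F.map β ≫ (Monoidal.εIso F).inv

section Aux

open CategoricalGroup

variable {A : Type u} [Groupoid.{v} A] [MonoidalCategory A] [CategoricalGroup A]

/-- Every object is isomorphic to its double weak inverse. -/
noncomputable def negNegIso (a : A) : a ≅ neg (neg a) :=
  (λ_ a).symm ≪≫ whiskerRightIso (iota (neg a)).symm a ≪≫ α_ _ _ _ ≪≫
    whiskerLeftIso (neg (neg a)) (iota a) ≪≫ ρ_ _

/-- The weak inverse is also a right inverse. -/
noncomputable def iotaR (a : A) : a ⊗ neg a ≅ 𝟙_ A :=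
  whiskerRightIso (negNegIso a) (neg a) ≪≫ iota (neg a)

/-- Given an iso `x ⊗ y ≅ 𝟙`, the composite of tensoring functors is iso to the identity. -/
noncomputable def cancelTensorIso (x y : A) (e : x ⊗ y ≅ 𝟙_ A) :
    tensorLeft y ⋙ tensorLeft x ≅ 𝟭 A :=
  (tensorLeftTensor x y).symm ≪≫ (curriedTensor A).mapIso e ≪≫ leftUnitorNatIso A

lemma tensorLeft_isEquivalence (a : A) : (tensorLeft a).IsEquivalence :=
  Functor.IsEquivalence.mk' (tensorLeft (neg a))
    (cancelTensorIso (neg a) a (iota a)).symm (cancelTensorIso a (neg a) (iotaR a))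

lemma whiskerLeft_bijective (a : A) {x y : A} :
    Function.Bijective (fun f : x ⟶ y => a ◁ f) := by
  have := tensorLeft_isEquivalence a
  constructor
  · intro f g h
    exact (tensorLeft a).map_injective h
  · intro g
    exact (tensorLeft a).map_surjective g

/-- The canonical identification of endomorphisms of `x` with `π₁`. -/
noncomputable def phi (x : A) (α : x ⟶ x) : Pi1 A :=
  (iota x).inv ≫ (neg x ◁ α) ≫ (iota x).hom

lemma phi_bijective (x : A) : Function.Bijective (phi x) := by
  constructor
  · intro α β h
    apply (whiskerLeft_bijective (neg x)).1
    simpa [phi, cancel_epi, cancel_mono] using h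
  · intro γ
    obtain ⟨α, hα⟩ := (whiskerLeft_bijective (neg x)).2 ((iota x).hom ≫ γ ≫ (iota x).inv)
    exact ⟨α, by simp [phi, hα]⟩

end Aux

section Main

open CategoricalGroup Functor.LaxMonoidal

variable {A A' : Type u} [Groupoid.{v} A] [MonoidalCategory A] [CategoricalGroup A]
    [Groupoid.{v} A'] [MonoidalCategory A'] [CategoricalGroup A']
    (F : A ⥤ A') [F.Monoidal]

/-- The analog of `phi` on the target, relative to `F`. -/
noncomputable def psi (x : A) (β : F.obj x ⟶ F.obj x) : Pi1 A' :=
  ε F ≫ F.map (iota x).inv ≫ inv (μ F (neg x) x) ≫ (F.obj (neg x) ◁ β) ≫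
    μ F (neg x) x ≫ F.map (iota x).hom ≫ (Monoidal.εIso F).inv

lemma psi_injective (x : A) : Function.Injective (psi F x) := by
  intro β₁ β₂ h
  apply (whiskerLeft_bijective (F.obj (neg x))).1
  simpa [psi, cancel_epi, cancel_mono] using h

omit [CategoricalGroup A'] in
lemma piOneMap_phi (x : A) (α : x ⟶ x) :
    piOneMap F (phi x α) = psi F x (F.map α) := by
  have h := Functor.LaxMonoidal.μ_natural_right (F := F) (neg x) α
  simp only [piOneMap, phi, psi, F.map_comp, Category.assoc]
  congr 2
  rw [IsIso.eq_inv_comp, reassoc_of% h]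

end Main

/-- A monoidal functor between categorical groups is an equivalence of categories
if and only if it induces an isomorphism on `π₀` and on `π₁`. -/
theorem monoidalFunctor_isEquivalence_iff_pi0_pi1_bijective
    {A A' : Type u} [Groupoid.{v} A] [MonoidalCategory A] [CategoricalGroup A]
    [Groupoid.{v} A'] [MonoidalCategory A'] [CategoricalGroup A']
    (F : A ⥤ A') [F.Monoidal] :
    F.IsEquivalence ↔
      (Function.Bijective (piZeroMap F) ∧ Function.Bijective (piOneMap F)) := by
  constructor
  · intro hF
    refine ⟨⟨?_, ?_⟩, ?_, ?_⟩
    · rintro ⟨x⟩ ⟨y⟩ h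
      exact Quotient.sound ⟨F.preimageIso (Quotient.exact h).some⟩
    · rintro ⟨y'⟩
      exact ⟨⟦F.objPreimage y'⟧, Quotient.sound ⟨F.objObjPreimageIso y'⟩⟩
    · intro β γ h
      apply F.map_injective
      simpa [piOneMap, cancel_epi, cancel_mono] using h
    · intro δ
      obtain ⟨β, hβ⟩ := F.map_surjective
        ((Monoidal.εIso F).inv ≫ δ ≫ Functor.LaxMonoidal.ε F)
      refine ⟨β, ?_⟩
      simp [piOneMap, hβ]
  · rintro ⟨⟨h0inj, h0surj⟩, h1inj, h1surj⟩
    have hfaith : F.Faithful := by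
      refine ⟨fun {x y} f g h => ?_⟩
      have hα : F.map (f ≫ Groupoid.inv g) = 𝟙 _ := by
        simp [F.map_comp, h, ← F.map_comp]
      have key : f ≫ Groupoid.inv g = 𝟙 x := by
        apply (phi_bijective x).1
        apply h1inj
        rw [piOneMap_phi, piOneMap_phi, hα, F.map_id]
      calc f = (f ≫ Groupoid.inv g) ≫ g := by simp
        _ = g := by rw [key]; simp
    have hfull : F.Full := by
      refine ⟨fun {x y} h' => ?_⟩
      have hiso : Nonempty (x ≅ y) := by
        apply Quotient.exact (s := isoSetoid A)
        apply h0inj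
        exact Quotient.sound ⟨asIso h'⟩
      obtain ⟨e⟩ := hiso
      set β' : F.obj x ⟶ F.obj x := h' ≫ Groupoid.inv (F.map e.hom) with hβ'
      obtain ⟨γ, hγ⟩ := h1surj (psi F x β')
      obtain ⟨α, hα⟩ := (phi_bijective x).2 γ
      have : F.map α = β' := by
        apply psi_injective
        rw [← piOneMap_phi, hα, hγ]
      exact ⟨α ≫ e.hom, by simp [this, hβ']⟩
    have hes : F.EssSurj := by
      refine ⟨fun y' => ?_⟩
      obtain ⟨q, hq⟩ := h0surj ⟦y'⟧
      induction q using Quotient.ind with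
      | _ x => exact ⟨x, Quotient.exact hq⟩
    exact { faithful := hfaith, full := hfull, essSurj := hes }
end

section
/- In a braided categorical group A, if parallel morphisms α_i, α'_i : x_i → y_i (i = 1, 2) have deviations β_1, β_2 ∈ π₁(A) respectively, then α_1 + α_2 and α'_1 + α'_2 : x_1 + x_2 → y_1 + y_2 have deviation β_1 + β_2. -/
open CategoryTheory MonoidalCategory

universe v u

/-- `β ∈ π₁` is the deviation of the parallel morphisms `α, α' : x ⟶ y`:
`ρ(y) ∘ (α + β) = α' ∘ ρ(x)`. -/
def IsDeviation {A : Type u} [Category.{v} A] [MonoidalCategory A]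
    {x y : A} (α α' : x ⟶ y) (β : 𝟙_ A ⟶ 𝟙_ A) : Prop :=
  (α ⊗ₘ β) ≫ (ρ_ y).hom = (ρ_ x).hom ≫ α'

/-- The sum `β₁ + β₂` of two elements of `π₁`, i.e. the composite
`0 → 0+0 → 0+0 → 0` of `λ(0)⁻¹`, `β₁ ⊗ β₂` and `λ(0)`. -/
def pi1Add {A : Type u} [Category.{v} A] [MonoidalCategory A]
    (β₁ β₂ : 𝟙_ A ⟶ 𝟙_ A) : 𝟙_ A ⟶ 𝟙_ A :=
  (λ_ (𝟙_ A)).inv ≫ (β₁ ⊗ₘ β₂) ≫ (λ_ (𝟙_ A)).hom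

/-! Let `β ∈ End (𝟙_ A)` act on an object `y` by `ρ_y ∘ (y ◁ β) ∘ ρ_y⁻¹`. Then `β` is the
deviation of `α, α'` exactly when `α'` is `α` followed by the action of `β` on the target.
The sum in `π₁` is composition (as `λ_ (𝟙_ A) = ρ_ (𝟙_ A)`), and in a braided category the
action of `β` through the left unitor agrees with the one through the right unitor. Hence
`β₁ ≫ β₂` acts on `y₁ ⊗ y₂` as `β₁` on `y₁` tensored with `β₂` on `y₂`, and the claim is the
interchange law. -/

section Monoidal

variable {A : Type u} [Category.{v} A] [MonoidalCategory A]

lemma pi1Add_eq_comp (β₁ β₂ : 𝟙_ A ⟶ 𝟙_ A) : pi1Add β₁ β₂ = β₁ ≫ β₂ := by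
  simp [pi1Add, MonoidalCategory.tensorHom_def, unitors_equal, unitors_inv_equal]

def rightAct (x : A) (β : 𝟙_ A ⟶ 𝟙_ A) : x ⟶ x := (ρ_ x).inv ≫ x ◁ β ≫ (ρ_ x).hom

def leftAct (x : A) (β : 𝟙_ A ⟶ 𝟙_ A) : x ⟶ x := (λ_ x).inv ≫ β ▷ x ≫ (λ_ x).hom

lemma rightAct_comp (x : A) (β₁ β₂ : 𝟙_ A ⟶ 𝟙_ A) :
    rightAct x (β₁ ≫ β₂) = rightAct x β₁ ≫ rightAct x β₂ := by
  simp [rightAct]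

lemma rightAct_tensorObj (x y : A) (β : 𝟙_ A ⟶ 𝟙_ A) :
    rightAct (x ⊗ y) β = x ◁ rightAct y β := by
  simp only [rightAct, rightUnitor_tensor_hom, rightUnitor_tensor_inv, whiskerLeft_comp,
    associator_naturality_right_assoc, Category.assoc, Iso.inv_hom_id_assoc]

lemma leftAct_tensorObj (x y : A) (β : 𝟙_ A ⟶ 𝟙_ A) :
    leftAct (x ⊗ y) β = leftAct x β ▷ y := by
  simp only [leftAct, leftUnitor_tensor_hom, leftUnitor_tensor_inv, comp_whiskerRight,
    associator_inv_naturality_left_assoc, Category.assoc, Iso.hom_inv_id_assoc]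

lemma isDeviation_iff_comp_rightAct {x y : A} (α α' : x ⟶ y) (β : 𝟙_ A ⟶ 𝟙_ A) :
    IsDeviation α α' β ↔ α ≫ rightAct y β = α' := by
  have hρ : (α ⊗ₘ β) ≫ (ρ_ y).hom = (ρ_ x).hom ≫ α ≫ rightAct y β := by
    simp [MonoidalCategory.tensorHom_def, rightAct]
  rw [IsDeviation, hρ, cancel_epi]

end Monoidal

section Braided

variable {A : Type u} [Category.{v} A] [MonoidalCategory A] [BraidedCategory A]

lemma leftAct_eq_rightAct (x : A) (β : 𝟙_ A ⟶ 𝟙_ A) : leftAct x β = rightAct x β := by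
  have hleft : (λ_ x).hom = (β_ (𝟙_ A) x).hom ≫ (ρ_ x).hom := (braiding_rightUnitor x).symm
  have hleftInv : (λ_ x).inv = (ρ_ x).inv ≫ (β_ (𝟙_ A) x).inv := by
    rw [← cancel_mono (λ_ x).hom, Iso.inv_hom_id, hleft]
    simp
  simp only [leftAct, rightAct, hleft, hleftInv, Category.assoc,
    reassoc_of% BraidedCategory.braiding_naturality_left β x, Iso.inv_hom_id_assoc]

lemma rightAct_comp_tensorObj (x y : A) (β₁ β₂ : 𝟙_ A ⟶ 𝟙_ A) :
    rightAct (x ⊗ y) (β₁ ≫ β₂) = rightAct x β₁ ⊗ₘ rightAct y β₂ := by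
  rw [rightAct_comp, MonoidalCategory.tensorHom_def, ← leftAct_eq_rightAct (x ⊗ y) β₁,
    leftAct_tensorObj, leftAct_eq_rightAct, rightAct_tensorObj]

end Braided

theorem deviation_tensor_general
    {A : Type u} [Groupoid.{v} A] [MonoidalCategory A] [BraidedCategory A]
    {x₁ y₁ x₂ y₂ : A} (α₁ α'₁ : x₁ ⟶ y₁) (α₂ α'₂ : x₂ ⟶ y₂)
    (β₁ β₂ : 𝟙_ A ⟶ 𝟙_ A)
    (h₁ : IsDeviation α₁ α'₁ β₁) (h₂ : IsDeviation α₂ α'₂ β₂) :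
    IsDeviation (α₁ ⊗ₘ α₂) (α'₁ ⊗ₘ α'₂) (pi1Add β₁ β₂) := by
  rw [isDeviation_iff_comp_rightAct] at h₁ h₂ ⊢
  rw [pi1Add_eq_comp, rightAct_comp_tensorObj, ← h₁, ← h₂, tensorHom_comp_tensorHom]

/-- In a braided categorical group, if `α_i, α'_i : x_i ⟶ y_i` (`i = 1, 2`)
have deviations `β₁, β₂` respectively, then `α₁ + α₂` and `α'₁ + α'₂` have
deviation `β₁ + β₂`. -/
theorem deviation_tensor
    {A : Type u} [Groupoid.{v} A] [MonoidalCategory A] [BraidedCategory A]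
    [CategoricalGroup A]
    {x₁ y₁ x₂ y₂ : A} (α₁ α'₁ : x₁ ⟶ y₁) (α₂ α'₂ : x₂ ⟶ y₂)
    (β₁ β₂ : 𝟙_ A ⟶ 𝟙_ A)
    (h₁ : IsDeviation α₁ α'₁ β₁) (h₂ : IsDeviation α₂ α'₂ β₂) :
    IsDeviation (α₁ ⊗ₘ α₂) (α'₁ ⊗ₘ α'₂) (pi1Add β₁ β₂) :=
  deviation_tensor_general α₁ α'₁ α₂ α'₂ β₁ β₂ h₁ h₂
end

section
/- For a categorical ring R, the set π₀(R) of isomorphism classes of objects, with addition and multiplication induced by + and ·, is an associative unital ring, and π₁(R) = Aut_R(0) is an abelian group carrying a natural π₀(R)-bimodule structure. -/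
open CategoryTheory MonoidalCategory

universe v u

/-- The canonical interchange isomorphism `(a+b)+(c+d) ⟶ (a+c)+(b+d)` of a
braided (symmetric) monoidal category, built from associators and the braiding
of the two middle factors. -/
def interchange {A : Type u} [Category.{v} A] [MonoidalCategory A] [BraidedCategory A]
    (a b c d : A) : (a ⊗ b) ⊗ (c ⊗ d) ⟶ (a ⊗ c) ⊗ (b ⊗ d) :=
  (α_ a b (c ⊗ d)).hom ≫
  (a ◁ (α_ b c d).inv) ≫
  (a ◁ ((β_ b c).hom ▷ d)) ≫
  (a ◁ (α_ c b d).hom) ≫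
  (α_ a c (b ⊗ d)).inv

/-- A categorical ring in the sense of Jibladze–Pirashvili: a symmetric
categorical group `(R, ⊗ = +, 𝟙_ = 0)` together with a multiplication
bifunctor, unit object `1`, associativity, unitality and distributivity
isomorphisms, subject to the coherence axioms. -/
class CategoricalRing (R : Type u) [Groupoid.{v} R] [MonoidalCategory R]
    [SymmetricCategory R] [CategoricalGroup R] where
  /-- multiplication on objects -/
  mul : R → R → R
  /-- multiplication of morphisms (the bifunctor on morphisms) -/
  mulHom : ∀ {a b c d : R}, (a ⟶ b) → (c ⟶ d) → (mul a c ⟶ mul b d)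
  mulHom_id : ∀ a c : R, mulHom (𝟙 a) (𝟙 c) = 𝟙 (mul a c)
  mulHom_comp : ∀ {a b c d e f : R} (g : a ⟶ b) (g' : b ⟶ c) (h : d ⟶ e) (h' : e ⟶ f),
    mulHom (g ≫ g') (h ≫ h') = mulHom g h ≫ mulHom g' h'
  /-- the multiplicative unit object -/
  one : R
  /-- associativity constraint `(rs)t ≅ r(st)` -/
  massoc : ∀ r s t : R, mul (mul r s) t ≅ mul r (mul s t)
  massoc_natural : ∀ {r r' s s' t t' : R} (f : r ⟶ r') (g : s ⟶ s') (h : t ⟶ t'),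
    mulHom (mulHom f g) h ≫ (massoc r' s' t').hom = (massoc r s t).hom ≫ mulHom f (mulHom g h)
  /-- left unit constraint `1r ≅ r` -/
  lunit : ∀ r : R, mul one r ≅ r
  /-- right unit constraint `r1 ≅ r` -/
  runit : ∀ r : R, mul r one ≅ r
  lunit_natural : ∀ {r r' : R} (f : r ⟶ r'),
    mulHom (𝟙 one) f ≫ (lunit r').hom = (lunit r).hom ≫ f
  runit_natural : ∀ {r r' : R} (f : r ⟶ r'),
    mulHom f (𝟙 one) ≫ (runit r').hom = (runit r).hom ≫ f
  /-- left distributivity constraint `r(s₀+s₁) ≅ rs₀+rs₁` -/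
  ldistrib : ∀ r s₀ s₁ : R, mul r (s₀ ⊗ s₁) ≅ mul r s₀ ⊗ mul r s₁
  /-- right distributivity constraint `(r₀+r₁)s ≅ r₀s+r₁s` -/
  rdistrib : ∀ r₀ r₁ s : R, mul (r₀ ⊗ r₁) s ≅ mul r₀ s ⊗ mul r₁ s
  ldistrib_natural : ∀ {r r' s₀ s₀' s₁ s₁' : R} (f : r ⟶ r') (g₀ : s₀ ⟶ s₀') (g₁ : s₁ ⟶ s₁'),
    mulHom f (g₀ ⊗ₘ g₁) ≫ (ldistrib r' s₀' s₁').hom =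
      (ldistrib r s₀ s₁).hom ≫ (mulHom f g₀ ⊗ₘ mulHom f g₁)
  rdistrib_natural : ∀ {r₀ r₀' r₁ r₁' s s' : R} (f₀ : r₀ ⟶ r₀') (f₁ : r₁ ⟶ r₁') (g : s ⟶ s'),
    mulHom (f₀ ⊗ₘ f₁) g ≫ (rdistrib r₀' r₁' s').hom =
      (rdistrib r₀ r₁ s).hom ≫ (mulHom f₀ g ⊗ₘ mulHom f₁ g)
  /-- pentagon coherence for the multiplicative associativity -/
  mpentagon : ∀ r s t u : R,
    mulHom (massoc r s t).hom (𝟙 u) ≫ (massoc r (mul s t) u).hom ≫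
      mulHom (𝟙 r) (massoc s t u).hom =
    (massoc (mul r s) t u).hom ≫ (massoc r s (mul t u)).hom
  /-- triangle coherence for the multiplicative units -/
  mtriangle : ∀ r s : R,
    (massoc r one s).hom ≫ mulHom (𝟙 r) (lunit s).hom = mulHom (runit r).hom (𝟙 s)
  /-- compatibility of `massoc` with left distributivity -/
  assoc_ldistrib : ∀ r s t₀ t₁ : R,
    (massoc r s (t₀ ⊗ t₁)).hom ≫ mulHom (𝟙 r) (ldistrib s t₀ t₁).hom ≫
      (ldistrib r (mul s t₀) (mul s t₁)).hom =
    (ldistrib (mul r s) t₀ t₁).hom ≫ ((massoc r s t₀).hom ⊗ₘ (massoc r s t₁).hom)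
  /-- compatibility of `massoc` with the two distributivities (middle diagram) -/
  ldistrib_rdistrib_assoc : ∀ r s₀ s₁ t : R,
    mulHom (ldistrib r s₀ s₁).hom (𝟙 t) ≫ (rdistrib (mul r s₀) (mul r s₁) t).hom ≫
      ((massoc r s₀ t).hom ⊗ₘ (massoc r s₁ t).hom) =
    (massoc r (s₀ ⊗ s₁) t).hom ≫ mulHom (𝟙 r) (rdistrib s₀ s₁ t).hom ≫
      (ldistrib r (mul s₀ t) (mul s₁ t)).hom
  /-- compatibility of `massoc` with right distributivity -/
  assoc_rdistrib : ∀ r₀ r₁ s t : R,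
    mulHom (rdistrib r₀ r₁ s).hom (𝟙 t) ≫ (rdistrib (mul r₀ s) (mul r₁ s) t).hom ≫
      ((massoc r₀ s t).hom ⊗ₘ (massoc r₁ s t).hom) =
    (massoc (r₀ ⊗ r₁) s t).hom ≫ (rdistrib r₀ r₁ (mul s t)).hom
  /-- compatibility of the unit constraints with distributivity -/
  lunit_distrib : ∀ r₀ r₁ : R,
    (ldistrib one r₀ r₁).hom ≫ ((lunit r₀).hom ⊗ₘ (lunit r₁).hom) = (lunit (r₀ ⊗ r₁)).hom
  runit_distrib : ∀ r₀ r₁ : R,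
    (rdistrib r₀ r₁ one).hom ≫ ((runit r₀).hom ⊗ₘ (runit r₁).hom) = (runit (r₀ ⊗ r₁)).hom
  /-- compatibility of left distributivity with the interchange -/
  ldistrib_interchange : ∀ r s₀₀ s₀₁ s₁₀ s₁₁ : R,
    (ldistrib r (s₀₀ ⊗ s₀₁) (s₁₀ ⊗ s₁₁)).hom ≫
      ((ldistrib r s₀₀ s₀₁).hom ⊗ₘ (ldistrib r s₁₀ s₁₁).hom) ≫
      interchange (mul r s₀₀) (mul r s₀₁) (mul r s₁₀) (mul r s₁₁) =
    mulHom (𝟙 r) (interchange s₀₀ s₀₁ s₁₀ s₁₁) ≫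
      (ldistrib r (s₀₀ ⊗ s₁₀) (s₀₁ ⊗ s₁₁)).hom ≫
      ((ldistrib r s₀₀ s₁₀).hom ⊗ₘ (ldistrib r s₀₁ s₁₁).hom)
  /-- compatibility of the two distributivities with the interchange -/
  distrib_interchange : ∀ r₀ r₁ s₀ s₁ : R,
    (rdistrib r₀ r₁ (s₀ ⊗ s₁)).hom ≫
      ((ldistrib r₀ s₀ s₁).hom ⊗ₘ (ldistrib r₁ s₀ s₁).hom) ≫
      interchange (mul r₀ s₀) (mul r₀ s₁) (mul r₁ s₀) (mul r₁ s₁) =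
    (ldistrib (r₀ ⊗ r₁) s₀ s₁).hom ≫
      ((rdistrib r₀ r₁ s₀).hom ⊗ₘ (rdistrib r₀ r₁ s₁).hom)
  /-- compatibility of right distributivity with the interchange -/
  rdistrib_interchange : ∀ r₀₀ r₀₁ r₁₀ r₁₁ s : R,
    (rdistrib (r₀₀ ⊗ r₀₁) (r₁₀ ⊗ r₁₁) s).hom ≫
      ((rdistrib r₀₀ r₀₁ s).hom ⊗ₘ (rdistrib r₁₀ r₁₁ s).hom) ≫
      interchange (mul r₀₀ s) (mul r₀₁ s) (mul r₁₀ s) (mul r₁₁ s) =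
    mulHom (interchange r₀₀ r₀₁ r₁₀ r₁₁) (𝟙 s) ≫
      (rdistrib (r₀₀ ⊗ r₁₀) (r₀₁ ⊗ r₁₁) s).hom ≫
      ((rdistrib r₀₀ r₁₀ s).hom ⊗ₘ (rdistrib r₀₁ r₁₁ s).hom)

open CategoricalRing

/-- The isomorphism class of an object. -/
def mkPi0 {A : Type u} [Category.{v} A] (a : A) : Pi0 A := Quotient.mk (isoSetoid A) a

/-- The endomorphism of `0` with deviation `β` from the identity. -/
def devRep {A : Type u} [Category.{v} A] [MonoidalCategory A]
    (β : 𝟙_ A ⟶ 𝟙_ A) : 𝟙_ A ⟶ 𝟙_ A :=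
  (ρ_ (𝟙_ A)).inv ≫ ((𝟙 (𝟙_ A)) ⊗ₘ β) ≫ (ρ_ (𝟙_ A)).hom

variable (R : Type u) [Groupoid.{v} R] [MonoidalCategory R] [SymmetricCategory R]
  [CategoricalGroup R] [CategoricalRing R]

/-- Compatibility of a ring structure on `π₀(R)` with the structure of the
categorical ring: addition, multiplication, zero and one are induced by
`⊗ = +`, `·`, `0` and `1` of `R`. -/
def Pi0RingCompat (inst : Ring (Pi0 R)) : Prop :=
  letI := inst
  (∀ a b : R, mkPi0 a + mkPi0 b = mkPi0 (a ⊗ b)) ∧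
  (∀ a b : R, mkPi0 a * mkPi0 b = mkPi0 (mul a b)) ∧
  ((0 : Pi0 R) = mkPi0 (𝟙_ R)) ∧ ((1 : Pi0 R) = mkPi0 (one : R))

/-- `lsmul`/`rsmul` form a `π₀(R)`-bimodule structure on `π₁(R)`
(whose addition is composition of automorphisms of `0`). -/
def Pi1BimoduleCompat (inst : Ring (Pi0 R))
    (lsmul : Pi0 R → (𝟙_ R ⟶ 𝟙_ R) → (𝟙_ R ⟶ 𝟙_ R))
    (rsmul : (𝟙_ R ⟶ 𝟙_ R) → Pi0 R → (𝟙_ R ⟶ 𝟙_ R)) : Prop :=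
  letI := inst
  (∀ x y β, lsmul (x * y) β = lsmul x (lsmul y β)) ∧
  (∀ β, lsmul 1 β = β) ∧
  (∀ x β γ, lsmul x (β ≫ γ) = lsmul x β ≫ lsmul x γ) ∧
  (∀ x y β, lsmul (x + y) β = lsmul x β ≫ lsmul y β) ∧
  (∀ β, lsmul 0 β = 𝟙 (𝟙_ R)) ∧
  (∀ x y β, rsmul β (x * y) = rsmul (rsmul β x) y) ∧
  (∀ β, rsmul β 1 = β) ∧
  (∀ x β γ, rsmul (β ≫ γ) x = rsmul β x ≫ rsmul γ x) ∧
  (∀ x y β, rsmul β (x + y) = rsmul β x ≫ rsmul β y) ∧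
  (∀ β, rsmul β 0 = 𝟙 (𝟙_ R)) ∧
  (∀ x y β, rsmul (lsmul x β) y = lsmul x (rsmul β y))

/-!
The ring axioms of `π₀(R)` are witnessed by the structure isomorphisms of `R`; the only
one not given directly is `r·0 ≅ 0`, which holds because `r·0 ≅ r·0 + r·0` and an
idempotent object of a categorical group is isomorphic to `0`. By Eckmann–Hilton,
`π₁(R) = End(0)` is commutative, so transporting an endomorphism of an object `x ≅ 0`
to `End(0)` does not depend on the chosen isomorphism `x ≅ 0`. The action `r·β` is the
transport of `1_r·β` along `r·0 ≅ 0`, and each bimodule axiom follows by transporting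
along the structure isomorphism (associativity, distributivity, unit) whose naturality
intertwines the two endomorphisms being compared.
-/

section MonoidalUnit

variable {C : Type*} [Category C] [MonoidalCategory C]

theorem rightUnitor_unit_conj_tensorHom (β γ : 𝟙_ C ⟶ 𝟙_ C) :
    (ρ_ (𝟙_ C)).conj (β ⊗ₘ γ) = β ≫ γ := by
  rw [Iso.conj_apply, MonoidalCategory.tensorHom_def]
  simp [unitors_equal, unitors_inv_equal]

theorem unit_endo_comm (β γ : 𝟙_ C ⟶ 𝟙_ C) : β ≫ γ = γ ≫ β := by
  rw [← rightUnitor_unit_conj_tensorHom, Iso.conj_apply, tensorHom_def']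
  simp [unitors_equal, unitors_inv_equal]

theorem devRep_eq_self (β : 𝟙_ C ⟶ 𝟙_ C) : devRep β = β := by
  simp [devRep, id_tensorHom, unitors_equal, unitors_inv_equal]

theorem CategoryTheory.Iso.conj_unit_eq_self (u : 𝟙_ C ≅ 𝟙_ C) (γ : 𝟙_ C ⟶ 𝟙_ C) :
    u.conj γ = γ := by
  rw [Iso.conj_apply, unit_endo_comm u.inv, Category.assoc, Iso.hom_inv_id, Category.comp_id]

theorem CategoryTheory.Iso.conj_eq_conj_of_comm {x y : C} (f : x ≅ 𝟙_ C) (g : y ≅ 𝟙_ C)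
    (e : x ≅ y) {φ : x ⟶ x} {ψ : y ⟶ y} (h : φ ≫ e.hom = e.hom ≫ ψ) : f.conj φ = g.conj ψ := by
  have he : e.conj φ = ψ := by rw [Iso.conj_apply, h, e.inv_hom_id_assoc]
  rw [← (f.symm ≪≫ e ≪≫ g).conj_unit_eq_self (f.conj φ), Iso.trans_conj, Iso.trans_conj,
    Iso.symm_self_conj, he]

theorem tensorIso_trans_rightUnitor_conj {x y : C} (f : x ≅ 𝟙_ C) (g : y ≅ 𝟙_ C)
    (φ : x ⟶ x) (ψ : y ⟶ y) :
    (tensorIso f g ≪≫ ρ_ (𝟙_ C)).conj (φ ⊗ₘ ψ) = f.conj φ ≫ g.conj ψ := by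
  rw [Iso.trans_conj, ← rightUnitor_unit_conj_tensorHom]
  simp [Iso.conj_apply]

theorem isDeviation_id_conj {x : C} (f : x ≅ 𝟙_ C) (φ : x ⟶ x) :
    IsDeviation (𝟙 x) φ (f.conj φ) := by
  have hwhisker : x ◁ f.conj φ = f.hom ▷ 𝟙_ C ≫ 𝟙_ C ◁ f.conj φ ≫ f.inv ▷ 𝟙_ C := by
    rw [← whisker_exchange_assoc, ← comp_whiskerRight, f.hom_inv_id]
    simp
  rw [IsDeviation, id_tensorHom, hwhisker]
  simp [Iso.conj_apply, unitors_equal, unitors_inv_equal]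

end MonoidalUnit

theorem eq_id_of_comp_self {C : Type*} [Category C] {x : C} {φ : x ⟶ x} [Epi φ]
    (h : φ ≫ φ = φ) : φ = 𝟙 x :=
  (cancel_epi φ).mp (h.trans (Category.comp_id φ).symm)

section Pi0

variable {C : Type*} [Category C]

theorem mkPi0_eq_of_iso {a b : C} (e : a ≅ b) : mkPi0 a = mkPi0 b := Quotient.sound ⟨e⟩

instance [MonoidalCategory C] : Zero (Pi0 C) := ⟨mkPi0 (𝟙_ C)⟩

instance [MonoidalCategory C] : Add (Pi0 C) :=
  ⟨Quotient.map₂ (· ⊗ ·) fun _ _ ⟨e⟩ _ _ ⟨e'⟩ => ⟨tensorIso e e'⟩⟩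

end Pi0

namespace CategoricalGroup

variable {A : Type*} [Groupoid A] [MonoidalCategory A] [CategoricalGroup A]

def negIso [BraidedCategory A] {a b : A} (e : a ≅ b) : neg a ≅ neg b :=
  (ρ_ (neg a)).symm ≪≫
    whiskerLeftIso (neg a) ((β_ b (neg b) ≪≫ iota b).symm) ≪≫
    whiskerLeftIso (neg a) (whiskerRightIso e.symm (neg b)) ≪≫
    (α_ (neg a) a (neg b)).symm ≪≫
    whiskerRightIso (iota a) (neg b) ≪≫ λ_ (neg b)

instance [BraidedCategory A] : Neg (Pi0 A) :=
  ⟨Quotient.map neg fun _ _ ⟨e⟩ => ⟨negIso e⟩⟩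

def isoUnitOfIsoTensorSelf {a : A} (k : a ≅ a ⊗ a) : a ≅ 𝟙_ A :=
  (λ_ a).symm ≪≫ whiskerRightIso (iota a).symm a ≪≫ α_ (neg a) a a ≪≫
    whiskerLeftIso (neg a) k.symm ≪≫ iota a

end CategoricalGroup

namespace CategoricalRing

open CategoricalGroup

variable {R}

theorem mulHom_id_comp (r : R) {a b c : R} (f : a ⟶ b) (g : b ⟶ c) :
    mulHom (𝟙 r) (f ≫ g) = mulHom (𝟙 r) f ≫ mulHom (𝟙 r) g := by
  rw [← mulHom_comp, Category.comp_id]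

theorem mulHom_comp_id (r : R) {a b c : R} (f : a ⟶ b) (g : b ⟶ c) :
    mulHom (f ≫ g) (𝟙 r) = mulHom f (𝟙 r) ≫ mulHom g (𝟙 r) := by
  rw [← mulHom_comp, Category.comp_id]

@[simps]
def mulIso {a b c d : R} (e : a ≅ b) (f : c ≅ d) : mul a c ≅ mul b d where
  hom := mulHom e.hom f.hom
  inv := mulHom e.inv f.inv
  hom_inv_id := by rw [← mulHom_comp, e.hom_inv_id, f.hom_inv_id, mulHom_id]
  inv_hom_id := by rw [← mulHom_comp, e.inv_hom_id, f.inv_hom_id, mulHom_id]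

def mulZeroIso (r : R) : mul r (𝟙_ R) ≅ 𝟙_ R :=
  isoUnitOfIsoTensorSelf <|
    mulIso (Iso.refl r) (λ_ (𝟙_ R)).symm ≪≫ ldistrib r (𝟙_ R) (𝟙_ R)

def zeroMulIso (r : R) : mul (𝟙_ R) r ≅ 𝟙_ R :=
  isoUnitOfIsoTensorSelf <|
    mulIso (λ_ (𝟙_ R)).symm (Iso.refl r) ≪≫ rdistrib (𝟙_ R) (𝟙_ R) r

instance : Mul (Pi0 R) :=
  ⟨Quotient.map₂ mul fun _ _ ⟨e⟩ _ _ ⟨e'⟩ => ⟨mulIso e e'⟩⟩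

instance : One (Pi0 R) := ⟨mkPi0 (one : R)⟩

instance pi0Ring : Ring (Pi0 R) where
  add_assoc x y z := Quotient.inductionOn₃ x y z fun _ _ _ => mkPi0_eq_of_iso (α_ _ _ _)
  nsmul := nsmulRec
  zsmul := zsmulRec
  npow := npowRec
  zero_add x := Quotient.inductionOn x fun _ => mkPi0_eq_of_iso (λ_ _)
  add_zero x := Quotient.inductionOn x fun _ => mkPi0_eq_of_iso (ρ_ _)
  neg_add_cancel x := Quotient.inductionOn x fun _ => mkPi0_eq_of_iso (iota _)
  add_comm x y := Quotient.inductionOn₂ x y fun _ _ => mkPi0_eq_of_iso (β_ _ _)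
  left_distrib x y z := Quotient.inductionOn₃ x y z fun _ _ _ => mkPi0_eq_of_iso (ldistrib _ _ _)
  right_distrib x y z :=
    Quotient.inductionOn₃ x y z fun _ _ _ => mkPi0_eq_of_iso (rdistrib _ _ _)
  zero_mul x := Quotient.inductionOn x fun _ => mkPi0_eq_of_iso (zeroMulIso _)
  mul_zero x := Quotient.inductionOn x fun _ => mkPi0_eq_of_iso (mulZeroIso _)
  mul_assoc x y z := Quotient.inductionOn₃ x y z fun _ _ _ => mkPi0_eq_of_iso (massoc _ _ _)
  one_mul x := Quotient.inductionOn x fun _ => mkPi0_eq_of_iso (lunit _)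
  mul_one x := Quotient.inductionOn x fun _ => mkPi0_eq_of_iso (runit _)

def lsmulObj (r : R) (β : 𝟙_ R ⟶ 𝟙_ R) : 𝟙_ R ⟶ 𝟙_ R :=
  (mulZeroIso r).conj (mulHom (𝟙 r) β)

def rsmulObj (β : 𝟙_ R ⟶ 𝟙_ R) (r : R) : 𝟙_ R ⟶ 𝟙_ R :=
  (zeroMulIso r).conj (mulHom β (𝟙 r))

theorem mulHom_id_conj (r : R) {x : R} (f : x ≅ 𝟙_ R) (φ : x ⟶ x) :
    mulHom (𝟙 r) (f.conj φ) = (mulIso (Iso.refl r) f).conj (mulHom (𝟙 r) φ) := by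
  simp [Iso.conj_apply, mulHom_id_comp]

theorem mulHom_conj_id {x : R} (f : x ≅ 𝟙_ R) (φ : x ⟶ x) (s : R) :
    mulHom (f.conj φ) (𝟙 s) = (mulIso f (Iso.refl s)).conj (mulHom φ (𝟙 s)) := by
  simp [Iso.conj_apply, mulHom_comp_id]

theorem lsmulObj_congr {a b : R} (e : a ≅ b) (β : 𝟙_ R ⟶ 𝟙_ R) :
    lsmulObj a β = lsmulObj b β :=
  Iso.conj_eq_conj_of_comm _ _ (mulIso e (Iso.refl _)) (by simp [← mulHom_comp])

theorem rsmulObj_congr {a b : R} (e : a ≅ b) (β : 𝟙_ R ⟶ 𝟙_ R) :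
    rsmulObj β a = rsmulObj β b :=
  Iso.conj_eq_conj_of_comm _ _ (mulIso (Iso.refl _) e) (by simp [← mulHom_comp])

theorem lsmulObj_one (β : 𝟙_ R ⟶ 𝟙_ R) : lsmulObj (one : R) β = β :=
  (Iso.conj_eq_conj_of_comm _ (Iso.refl _) (lunit _) (lunit_natural β)).trans
    (Iso.refl_conj β)

theorem rsmulObj_one (β : 𝟙_ R ⟶ 𝟙_ R) : rsmulObj β (one : R) = β :=
  (Iso.conj_eq_conj_of_comm _ (Iso.refl _) (runit _) (runit_natural β)).trans
    (Iso.refl_conj β)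

theorem lsmulObj_comp (r : R) (β γ : 𝟙_ R ⟶ 𝟙_ R) :
    lsmulObj r (β ≫ γ) = lsmulObj r β ≫ lsmulObj r γ := by
  unfold lsmulObj
  rw [mulHom_id_comp, Iso.conj_comp]

theorem rsmulObj_comp (r : R) (β γ : 𝟙_ R ⟶ 𝟙_ R) :
    rsmulObj (β ≫ γ) r = rsmulObj β r ≫ rsmulObj γ r := by
  unfold rsmulObj
  rw [mulHom_comp_id, Iso.conj_comp]

theorem lsmulObj_tensor (r s : R) (β : 𝟙_ R ⟶ 𝟙_ R) :
    lsmulObj (r ⊗ s) β = lsmulObj r β ≫ lsmulObj s β := by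
  rw [lsmulObj, lsmulObj, lsmulObj, ← tensorIso_trans_rightUnitor_conj]
  refine Iso.conj_eq_conj_of_comm _ _ (rdistrib r s (𝟙_ R)) ?_
  simpa [id_tensorHom_id] using rdistrib_natural (𝟙 r) (𝟙 s) β

theorem rsmulObj_tensor (r s : R) (β : 𝟙_ R ⟶ 𝟙_ R) :
    rsmulObj β (r ⊗ s) = rsmulObj β r ≫ rsmulObj β s := by
  rw [rsmulObj, rsmulObj, rsmulObj, ← tensorIso_trans_rightUnitor_conj]
  refine Iso.conj_eq_conj_of_comm _ _ (ldistrib (𝟙_ R) r s) ?_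
  simpa [id_tensorHom_id] using ldistrib_natural β (𝟙 r) (𝟙 s)

theorem lsmulObj_unit (β : 𝟙_ R ⟶ 𝟙_ R) : lsmulObj (𝟙_ R) β = 𝟙 (𝟙_ R) :=
  eq_id_of_comp_self ((lsmulObj_tensor _ _ β).symm.trans (lsmulObj_congr (λ_ (𝟙_ R)) β))

theorem rsmulObj_unit (β : 𝟙_ R ⟶ 𝟙_ R) : rsmulObj β (𝟙_ R) = 𝟙 (𝟙_ R) :=
  eq_id_of_comp_self ((rsmulObj_tensor _ _ β).symm.trans (rsmulObj_congr (λ_ (𝟙_ R)) β))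

theorem lsmulObj_mul (r s : R) (β : 𝟙_ R ⟶ 𝟙_ R) :
    lsmulObj (mul r s) β = lsmulObj r (lsmulObj s β) := by
  unfold lsmulObj
  rw [mulHom_id_conj, ← Iso.trans_conj]
  refine Iso.conj_eq_conj_of_comm _ _ (massoc r s (𝟙_ R)) ?_
  simpa [mulHom_id] using massoc_natural (𝟙 r) (𝟙 s) β

theorem rsmulObj_mul (r s : R) (β : 𝟙_ R ⟶ 𝟙_ R) :
    rsmulObj β (mul r s) = rsmulObj (rsmulObj β r) s := by
  unfold rsmulObj
  rw [mulHom_conj_id, ← Iso.trans_conj]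
  refine (Iso.conj_eq_conj_of_comm _ _ (massoc (𝟙_ R) r s) ?_).symm
  simpa [mulHom_id] using massoc_natural β (𝟙 r) (𝟙 s)

theorem rsmulObj_lsmulObj (r s : R) (β : 𝟙_ R ⟶ 𝟙_ R) :
    rsmulObj (lsmulObj r β) s = lsmulObj r (rsmulObj β s) := by
  unfold lsmulObj rsmulObj
  rw [mulHom_id_conj, mulHom_conj_id, ← Iso.trans_conj, ← Iso.trans_conj]
  exact Iso.conj_eq_conj_of_comm _ _ (massoc r (𝟙_ R) s) (massoc_natural (𝟙 r) β (𝟙 s))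

theorem isDeviation_lsmulObj (r : R) (β : 𝟙_ R ⟶ 𝟙_ R) :
    IsDeviation (mulHom (𝟙 r) (𝟙 (𝟙_ R))) (mulHom (𝟙 r) (devRep β)) (lsmulObj r β) := by
  rw [mulHom_id, devRep_eq_self]
  exact isDeviation_id_conj _ _

theorem isDeviation_rsmulObj (r : R) (β : 𝟙_ R ⟶ 𝟙_ R) :
    IsDeviation (mulHom (𝟙 (𝟙_ R)) (𝟙 r)) (mulHom (devRep β) (𝟙 r)) (rsmulObj β r) := by
  rw [mulHom_id, devRep_eq_self]
  exact isDeviation_id_conj _ _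

def Pi0.lsmul (x : Pi0 R) (β : 𝟙_ R ⟶ 𝟙_ R) : 𝟙_ R ⟶ 𝟙_ R :=
  Quotient.lift (s := isoSetoid R) (lsmulObj · β) (fun _ _ ⟨e⟩ => lsmulObj_congr e β) x

def Pi0.rsmul (β : 𝟙_ R ⟶ 𝟙_ R) (x : Pi0 R) : 𝟙_ R ⟶ 𝟙_ R :=
  Quotient.lift (s := isoSetoid R) (rsmulObj β ·) (fun _ _ ⟨e⟩ => rsmulObj_congr e β) x

theorem pi1BimoduleCompat : Pi1BimoduleCompat R pi0Ring Pi0.lsmul Pi0.rsmul :=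
  ⟨fun x y β => Quotient.inductionOn₂ x y fun r s => lsmulObj_mul r s β,
    lsmulObj_one,
    fun x β γ => Quotient.inductionOn x fun r => lsmulObj_comp r β γ,
    fun x y β => Quotient.inductionOn₂ x y fun r s => lsmulObj_tensor r s β,
    lsmulObj_unit,
    fun x y β => Quotient.inductionOn₂ x y fun r s => rsmulObj_mul r s β,
    rsmulObj_one,
    fun x β γ => Quotient.inductionOn x fun r => rsmulObj_comp r β γ,
    fun x y β => Quotient.inductionOn₂ x y fun r s => rsmulObj_tensor r s β,
    rsmulObj_unit,
    fun x y β => Quotient.inductionOn₂ x y fun r s => rsmulObj_lsmulObj r s β⟩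

end CategoricalRing

/-- For a categorical ring `R`, the set `π₀(R)` of isomorphism classes of
objects carries a ring structure induced by `+` and `·`; `π₁(R) = Aut(0)` is an
abelian group (under composition) and carries a natural `π₀(R)`-bimodule
structure, the actions `r·β` and `β·r` being characterized as the deviations of
`r·(−)`, `(−)·r` applied to a pair of parallel morphisms with deviation `β`. -/
theorem pi0_ring_pi1_bimodule :
    ∃ inst : Ring (Pi0 R), Pi0RingCompat R inst ∧
      (∀ β γ : 𝟙_ R ⟶ 𝟙_ R, β ≫ γ = γ ≫ β) ∧
      ∃ (lsmul : Pi0 R → (𝟙_ R ⟶ 𝟙_ R) → (𝟙_ R ⟶ 𝟙_ R))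
        (rsmul : (𝟙_ R ⟶ 𝟙_ R) → Pi0 R → (𝟙_ R ⟶ 𝟙_ R)),
        Pi1BimoduleCompat R inst lsmul rsmul ∧
        (∀ (r : R) (β : 𝟙_ R ⟶ 𝟙_ R),
          IsDeviation (mulHom (𝟙 r) (𝟙 (𝟙_ R))) (mulHom (𝟙 r) (devRep β))
            (lsmul (mkPi0 r) β)) ∧
        (∀ (r : R) (β : 𝟙_ R ⟶ 𝟙_ R),
          IsDeviation (mulHom (𝟙 (𝟙_ R)) (𝟙 r)) (mulHom (devRep β) (𝟙 r))
            (rsmul β (mkPi0 r))) :=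
  ⟨pi0Ring, ⟨fun _ _ => rfl, fun _ _ => rfl, rfl, rfl⟩, unit_endo_comm, Pi0.lsmul, Pi0.rsmul,
    pi1BimoduleCompat, isDeviation_lsmulObj, isDeviation_rsmulObj⟩
end
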